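/- For every integer N ≥ 3, one has (N−1)! · N^{N²−2N} · (N−1)^{−(N²−N)} < 1; equivalently, Γ(N)^{1/(N−1)} (N−1)^{−N} N^{(N²−2N)/(N−1)} < 1. -/

import Mathlib

open MeasureTheory Filter
open scoped ENNReal

noncomputable section

/-- Euclidean space `ℝ^N`. -/
abbrev Euc (N : ℕ) : Type := EuclideanSpace ℝ (Fin N)

/-- The `L^p` norm on `ℝ^N` with real exponent `p`. -/
def pNorm (N : ℕ) (p : ℝ) (u : Euc N → ℝ) : ℝ :=
  (eLpNorm u (ENNReal.ofReal p) volume).toReal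

/-- The `L^N` norm of the gradient. -/
def gradNorm (N : ℕ) (u : Euc N → ℝ) : ℝ :=
  (eLpNorm (fun x => fderiv ℝ u x) (N : ℝ≥0∞) volume).toReal

/-- Membership in the Sobolev space `W^{1,N}(ℝ^N)`. -/
def MemW1N (N : ℕ) (u : Euc N → ℝ) : Prop :=
  MemLp u (N : ℝ≥0∞) volume ∧ Differentiable ℝ u ∧
    MemLp (fun x => fderiv ℝ u x) (N : ℝ≥0∞) volume

/-- `Φ_N(t) = e^t - Σ_{j=0}^{N-2} t^j/j!`. -/
def PhiN (N : ℕ) (t : ℝ) : ℝ :=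
  Real.exp t - ∑ j ∈ Finset.range (N - 1), t ^ j / (Nat.factorial j : ℝ)

/-- `Ψ_N(s) = Φ_N(s) - s^{N-1}/(N-1)!`. -/
def PsiN (N : ℕ) (s : ℝ) : ℝ :=
  PhiN N s - s ^ (N - 1) / (Nat.factorial (N - 1) : ℝ)

/-- `N' = N/(N-1)`. -/
def Nprime (N : ℕ) : ℝ := (N : ℝ) / ((N : ℝ) - 1)

/-- `ω_{N-1}`, the surface area of the unit sphere in `ℝ^N`
(equals `N` times the volume of the unit ball). -/
def sphereArea (N : ℕ) : ℝ :=
  N * (volume (Metric.ball (0 : Euc N) 1)).toReal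

/-- `α_N = N ω_{N-1}^{1/(N-1)}`. -/
def alphaN (N : ℕ) : ℝ := N * sphereArea N ^ ((1 : ℝ) / ((N : ℝ) - 1))

/-- The constraint set: `u ∈ W^{1,N}` with `‖∇u‖_N^a + ‖u‖_N^b = 1`. -/
def MTconstraint (N : ℕ) (a b : ℝ) (u : Euc N → ℝ) : Prop :=
  MemW1N N u ∧ gradNorm N u ^ a + pNorm N (N : ℝ) u ^ b = 1

/-- The Moser–Trudinger functional `∫_{ℝ^N} Φ_N(α |u|^{N'}) dx`. -/
def MTint (N : ℕ) (α : ℝ) (u : Euc N → ℝ) : ℝ :=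
  ∫ x, PhiN N (α * |u x| ^ Nprime N)

/-- `D_{N,α}(a,b)`, the Moser–Trudinger supremum under the inhomogeneous constraint. -/
def Dsup (N : ℕ) (α a b : ℝ) : ℝ :=
  sSup {c : ℝ | ∃ u : Euc N → ℝ, MTconstraint N a b u ∧ c = MTint N α u}

/-- `D_{N,α}(a,b)` is attained. -/
def Attains (N : ℕ) (α a b : ℝ) : Prop :=
  ∃ u : Euc N → ℝ, MTconstraint N a b u ∧ MTint N α u = Dsup N α a b

/-- `α_* = inf {α ∈ (0,α_N] : D_{N,α}(a,b) is attained}`, with value `∞`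
if `D_{N,α}(a,b)` is attained for no `α ∈ (0,α_N]`. -/
def alphaStar (N : ℕ) (a b : ℝ) : ℝ≥0∞ :=
  sInf {x : ℝ≥0∞ | ∃ α : ℝ, 0 < α ∧ α ≤ alphaN N ∧ Attains N α a b ∧ x = ENNReal.ofReal α}

/-- The best constant in the Gagliardo–Nirenberg inequality. -/
def BGN (N : ℕ) : ℝ :=
  sSup {c : ℝ | ∃ u : Euc N → ℝ, MemW1N N u ∧ ¬ u =ᵐ[volume] (0 : Euc N → ℝ) ∧
    c = pNorm N ((N : ℝ) * Nprime N) u ^ ((N : ℝ) * Nprime N) /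
        (pNorm N (N : ℝ) u ^ (N : ℝ) * gradNorm N u ^ ((N : ℝ) * Nprime N - (N : ℝ)))}

/-- `u` is radially symmetric. -/
def IsRadial (N : ℕ) (u : Euc N → ℝ) : Prop :=
  ∀ x y : Euc N, ‖x‖ = ‖y‖ → u x = u y

/-- Weak convergence in `L^N(ℝ^N)`: testing against functions in the dual `L^{N'}`. -/
def WeakLN (N : ℕ) (f : ℕ → Euc N → ℝ) (g : Euc N → ℝ) : Prop :=
  ∀ φ : Euc N → ℝ, MemLp φ (ENNReal.ofReal (Nprime N)) volume →
    Tendsto (fun n => ∫ x, f n x * φ x) atTop (nhds (∫ x, g x * φ x))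

/-- Weak convergence in `W^{1,N}(ℝ^N)`: weak `L^N` convergence of the functions and of
all directional derivatives. -/
def WeakW1N (N : ℕ) (u : ℕ → Euc N → ℝ) (u0 : Euc N → ℝ) : Prop :=
  WeakLN N u u0 ∧
    ∀ v : Euc N, WeakLN N (fun n x => fderiv ℝ (u n) x v) (fun x => fderiv ℝ u0 x v)

/-- A maximizing sequence for `D_{N,α}(a,b)`. -/
def MaximizingSeq (N : ℕ) (α a b : ℝ) (u : ℕ → Euc N → ℝ) : Prop :=
  (∀ n, MTconstraint N a b (u n)) ∧
    Tendsto (fun n => MTint N α (u n)) atTop (nhds (Dsup N α a b))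

/-!
Write `N = n + 1`; both inequalities reduce to `n! (n+1)^(n²-1) < n^(n²+n)`, the second one
being the `n`-th root of the first. Multiplying by `n + 1`, the bound `1 + 1/n < e^(1/n)` gives
`(n+1)^(n²) < n^(n²) eⁿ`, so it suffices that `n! eⁿ ≤ (n+1) nⁿ`. This follows from the
Stirling-type bound `n! ≤ e √n (n/e)ⁿ` (the Stirling sequence decreases from its value at `1`)
together with `e √n ≤ n + 1` for `n ≥ 6`; the cases `n < 6` are checked numerically.
-/

section FactorialBound

open Real Nat

theorem factorial_le_exp_one_mul_sqrt_mul_pow {n : ℕ} (hn : n ≠ 0) :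
    (n ! : ℝ) ≤ exp 1 * √n * (n / exp 1) ^ n := by
  obtain ⟨m, rfl⟩ := Nat.exists_eq_succ_of_ne_zero hn
  have hmono : Stirling.stirlingSeq (m + 1) ≤ exp 1 / √2 :=
    Stirling.stirlingSeq_one ▸ Stirling.stirlingSeq'_antitone (Nat.zero_le m)
  have hden : 0 < √(2 * (m + 1 : ℕ) : ℝ) * ((m + 1 : ℕ) / exp 1) ^ (m + 1) := by positivity
  calc ((m + 1) ! : ℝ) = Stirling.stirlingSeq (m + 1) * (√(2 * (m + 1 : ℕ) : ℝ) *
        ((m + 1 : ℕ) / exp 1) ^ (m + 1)) := by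
        rw [Stirling.stirlingSeq, div_mul_cancel₀ _ hden.ne']
    _ ≤ exp 1 / √2 * (√(2 * (m + 1 : ℕ) : ℝ) * ((m + 1 : ℕ) / exp 1) ^ (m + 1)) :=
        mul_le_mul_of_nonneg_right hmono hden.le
    _ = exp 1 * √(m + 1 : ℕ) * ((m + 1 : ℕ) / exp 1) ^ (m + 1) := by
        rw [Real.sqrt_mul zero_le_two]
        field_simp

theorem exp_one_mul_sqrt_le_add_one {x : ℝ} (hx : 6 ≤ x) : exp 1 * √x ≤ x + 1 := by
  have he : exp 1 < 2.8 := lt_trans exp_one_lt_d9 (by norm_num)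
  have hsq : (exp 1 * √x) ^ 2 ≤ (x + 1) ^ 2 := by
    rw [mul_pow, sq_sqrt (by linarith)]
    have he2 : exp 1 ^ 2 < 8 := by nlinarith [exp_pos 1]
    nlinarith
  exact (pow_le_pow_iff_left₀ (by positivity) (by positivity) two_ne_zero).mp hsq

theorem factorial_mul_exp_le {n : ℕ} (hn : 6 ≤ n) :
    (n ! : ℝ) * exp n ≤ (n + 1) * n ^ n := by
  calc (n ! : ℝ) * exp n ≤ exp 1 * √n * (n / exp 1) ^ n * exp n :=
        mul_le_mul_of_nonneg_right (factorial_le_exp_one_mul_sqrt_mul_pow (by omega)) (exp_pos _).le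
    _ = exp 1 * √n * n ^ n := by
        rw [div_pow, ← exp_nat_mul, mul_one]
        field_simp
    _ ≤ (n + 1) * n ^ n := by
        gcongr
        exact exp_one_mul_sqrt_le_add_one (by exact_mod_cast hn)

theorem add_one_pow_lt_pow_mul_exp {x : ℝ} (hx : 0 < x) {m : ℕ} (hm : m ≠ 0) :
    (x + 1) ^ m < x ^ m * exp (m / x) := by
  have hbase : x + 1 < x * exp (1 / x) := by
    have := add_one_lt_exp (one_div_ne_zero hx.ne')
    calc x + 1 = x * (1 / x + 1) := by field_simp; ring
      _ < x * exp (1 / x) := by gcongr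
  calc (x + 1) ^ m < (x * exp (1 / x)) ^ m := by gcongr
    _ = x ^ m * exp (m / x) := by rw [mul_pow, ← exp_nat_mul, mul_one_div]

theorem factorial_mul_add_one_pow_lt {n : ℕ} (hn : 2 ≤ n) :
    n ! * (n + 1) ^ (n ^ 2 - 1) < n ^ (n ^ 2 + n) := by
  rcases lt_or_ge n 6 with hsmall | hlarge
  · interval_cases n <;> norm_num [Nat.factorial]
  have hn0 : (0 : ℝ) < n := by positivity
  suffices (n ! : ℝ) * (n + 1) ^ (n ^ 2 - 1) * (n + 1) < n ^ (n ^ 2 + n) * (n + 1) by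
    exact_mod_cast lt_of_mul_lt_mul_right this (by positivity)
  calc (n ! : ℝ) * (n + 1) ^ (n ^ 2 - 1) * (n + 1) = n ! * (n + 1) ^ (n ^ 2) := by
        rw [mul_assoc, ← pow_succ, Nat.sub_add_cancel (Nat.one_le_pow _ _ (by omega))]
    _ < n ! * (n ^ (n ^ 2) * exp n) := by
        have hpow := add_one_pow_lt_pow_mul_exp hn0 (pow_ne_zero 2 (by omega : n ≠ 0))
        rw [show ((n ^ 2 : ℕ) : ℝ) / n = n by push_cast; field_simp] at hpow
        gcongr
    _ = n ^ (n ^ 2) * (n ! * exp n) := by ring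
    _ ≤ n ^ (n ^ 2) * ((n + 1) * n ^ n) :=
        mul_le_mul_of_nonneg_left (factorial_mul_exp_le hlarge) (by positivity)
    _ = n ^ (n ^ 2 + n) * (n + 1) := by ring

theorem factorial_mul_add_one_pow_mul_rpow_neg_lt_one {n : ℕ} (hn : 2 ≤ n) :
    (n ! : ℝ) * (n + 1) ^ (n ^ 2 - 1) * (n : ℝ) ^ (-(((n : ℝ) + 1) ^ 2 - ((n : ℝ) + 1)))
      < 1 := by
  have hneg : (n : ℝ) ^ (-(((n : ℝ) + 1) ^ 2 - ((n : ℝ) + 1))) =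
      ((n : ℝ) ^ (n ^ 2 + n))⁻¹ := by
    rw [show -(((n : ℝ) + 1) ^ 2 - ((n : ℝ) + 1)) = -((n ^ 2 + n : ℕ) : ℝ) by push_cast; ring,
      rpow_neg (by positivity), rpow_natCast]
  rw [hneg, mul_inv_lt_iff₀ (by positivity), one_mul]
  exact_mod_cast factorial_mul_add_one_pow_lt hn

end FactorialBound

/-- Claim 3 of Appendix A: for every integer `N ≥ 3`,
`(N-1)! · N^{N²-2N} · (N-1)^{-(N²-N)} < 1`; equivalently
`Γ(N)^{1/(N-1)} (N-1)^{-N} N^{(N²-2N)/(N-1)} < 1`. -/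
theorem factorial_power_inequality (N : ℕ) (hN : 3 ≤ N) :
    (Nat.factorial (N - 1) : ℝ) * (N : ℝ) ^ (N ^ 2 - 2 * N) *
        ((N : ℝ) - 1) ^ (-((N : ℝ) ^ 2 - (N : ℝ))) < 1 ∧
    Real.Gamma N ^ ((1 : ℝ) / ((N : ℝ) - 1)) * ((N : ℝ) - 1) ^ (-(N : ℝ)) *
        (N : ℝ) ^ (((N : ℝ) ^ 2 - 2 * (N : ℝ)) / ((N : ℝ) - 1)) < 1 := by
  obtain ⟨n, rfl⟩ : ∃ n, N = n + 1 := ⟨N - 1, by omega⟩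
  have hn : (0 : ℝ) < n := by norm_cast; omega
  have hsq : 1 ≤ n ^ 2 := Nat.one_le_pow _ _ (by omega)
  have hexp : (n + 1) ^ 2 - 2 * (n + 1) = n ^ 2 - 1 := by
    rw [show (n + 1) ^ 2 = n ^ 2 - 1 + 2 * (n + 1) by zify [hsq]; ring, Nat.add_sub_cancel]
  simp only [Nat.add_sub_cancel, hexp, Nat.cast_add_one, add_sub_cancel_right]
  have hfirst := factorial_mul_add_one_pow_mul_rpow_neg_lt_one (n := n) (by omega)
  refine ⟨hfirst, ?_⟩
  convert Real.rpow_lt_one (by positivity) hfirst (one_div_pos.2 hn) using 1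
  rw [Real.mul_rpow (by positivity) (by positivity), Real.mul_rpow (by positivity) (by positivity),
    ← Real.rpow_natCast ((n : ℝ) + 1) (n ^ 2 - 1), ← Real.rpow_mul (by positivity),
    ← Real.rpow_mul hn.le, Real.Gamma_nat_eq_factorial, Nat.cast_sub hsq, mul_right_comm]
  congr 2
  · congr 1
    push_cast
    field_simp
    ring
  · field_simp
    ring
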